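/- For $\sigma \in (0,1)$, $\beta > 0$, and integers $1 \le j \le n$, define $V_{n,j} = \frac{e^\beta \sigma^{j-1}}{\Gamma(n)} \sum_{l=0}^{n-1} \binom{n-1}{l}(-1)^l \beta^{l/\sigma} \Gamma\left(j - \frac{l}{\sigma}; \beta\right)$, where $\Gamma(a;x) = \int_x^\infty y^{a-1}e^{-y}\,dy$. Then the Gibbs recursion $V_{n,j} = V_{n+1,j+1} + (n - j\sigma) V_{n+1,j}$ holds. -/

import Mathlib

open MeasureTheory Real Set Finset

/-- Upper incomplete gamma function `Γ(a; x) = ∫_x^∞ y^(a-1) e^(-y) dy`. -/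
noncomputable def incGamma (a x : ℝ) : ℝ :=
  ∫ y in Set.Ioi x, y ^ (a - 1) * Real.exp (-y)

noncomputable def Vngg (σ β : ℝ) (n j : ℕ) : ℝ :=
  (Real.exp β * σ ^ (j - 1) / Real.Gamma n) *
    ∑ l ∈ Finset.range n, ((n - 1).choose l : ℝ) * (-1 : ℝ) ^ l * β ^ ((l : ℝ) / σ) *
      incGamma ((j : ℝ) - (l : ℝ) / σ) β

/-!
Integration by parts gives `Γ(b + 1; β) = b Γ(b; β) + β^b e^(-β)`. Applied to the terms
`Γ(j + 1 - l/σ; β)` of `V_{n+1,j+1}`, it turns `σ V_{n+1,j+1} + (n - jσ) V_{n+1,j}` into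
`∑ₗ (n - l) C(n, l) (-1)^l β^(l/σ) Γ(j - l/σ; β)` plus `σ e^(-β) β^j ∑ₗ C(n, l) (-1)^l`. The second
sum vanishes, and `(n - l) C(n, l) = n C(n - 1, l)` makes the first one `n` times the sum in
`V_{n,j}`; the prefactors match because `Γ(n + 1) = n Γ(n)`.
-/

lemma integrableOn_rpow_mul_exp_neg_Ioi (a : ℝ) {x : ℝ} (hx : 0 < x) :
    IntegrableOn (fun y : ℝ => y ^ a * exp (-y)) (Ioi x) := by
  refine integrable_of_isBigO_exp_neg one_half_pos (fun y hy => ?_) ?_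
  · exact ((continuousAt_rpow_const y a (Or.inl (hx.trans_le hy).ne')).mul
      (continuous_exp.comp continuous_neg).continuousAt).continuousWithinAt
  · simpa only [mul_comm] using (Gamma_integrand_isLittleO a).isBigO

lemma incGamma_add_one (a : ℝ) {x : ℝ} (hx : 0 < x) :
    incGamma (a + 1) x = a * incGamma a x + x ^ a * exp (-x) := by
  have hint := integrableOn_rpow_mul_exp_neg_Ioi a hx
  have hint' := (integrableOn_rpow_mul_exp_neg_Ioi (a - 1) hx).const_mul a
  have hderiv : ∀ y ∈ Ici x, HasDerivAt (fun y => -(y ^ a * exp (-y)))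
      (y ^ a * exp (-y) - a * (y ^ (a - 1) * exp (-y))) y := by
    intro y hy
    have hpow := hasDerivAt_rpow_const (p := a) (Or.inl (hx.trans_le hy).ne')
    exact (hpow.mul (hasDerivAt_neg y).exp).neg.congr_deriv (by ring)
  have hlim : Filter.Tendsto (fun y => -(y ^ a * exp (-y))) Filter.atTop (nhds (-0)) := by
    simpa only [neg_one_mul] using (tendsto_rpow_mul_exp_neg_mul_atTop_nhds_zero a 1 one_pos).neg
  have hparts := integral_Ioi_of_hasDerivAt_of_tendsto' hderiv (hint.sub hint') hlim
  rw [integral_sub hint hint', integral_const_mul] at hparts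
  simp only [incGamma, add_sub_cancel_right]
  linarith

lemma Finset.sum_range_succ_natCast_sub_mul_choose {R : Type*} [CommRing R] (n : ℕ)
    (f : ℕ → R) :
    ∑ l ∈ range (n + 1), ((n : R) - l) * n.choose l * f l
      = n * ∑ l ∈ range n, ((n - 1).choose l : R) * f l := by
  rw [sum_range_succ, sub_self, zero_mul, zero_mul, add_zero, mul_sum]
  refine sum_congr rfl fun l hl => ?_
  have hl : l < n := mem_range.mp hl
  obtain ⟨m, rfl⟩ : ∃ m, n = m + 1 := ⟨n - 1, by omega⟩
  have hchoose := congrArg (Nat.cast : ℕ → R) (Nat.choose_mul_succ_eq m l)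
  push_cast [Nat.cast_sub hl.le] at hchoose ⊢
  linear_combination (-f l) * hchoose

noncomputable def nggSum (σ β : ℝ) (n : ℕ) (a : ℝ) : ℝ :=
  ∑ l ∈ range n, ((n - 1).choose l : ℝ) * (-1) ^ l * β ^ ((l : ℝ) / σ) *
    incGamma (a - l / σ) β

lemma Vngg_eq_nggSum (σ β : ℝ) (n j : ℕ) :
    Vngg σ β n j = exp β * σ ^ (j - 1) / Gamma n * nggSum σ β n j :=
  rfl

lemma nggSum_recursion {σ β : ℝ} (hσ : σ ≠ 0) (hβ : 0 < β) {n : ℕ} (hn : n ≠ 0) (a : ℝ) :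
    σ * nggSum σ β (n + 1) (a + 1) + (n - a * σ) * nggSum σ β (n + 1) a
      = n * nggSum σ β n a := by
  have hterm : ∀ l : ℕ, σ * incGamma (a + 1 - l / σ) β + (n - a * σ) * incGamma (a - l / σ) β
      = (n - l) * incGamma (a - l / σ) β + σ * exp (-β) * β ^ (a - l / σ) := by
    intro l
    rw [show a + 1 - l / σ = a - l / σ + 1 by ring, incGamma_add_one _ hβ]
    field_simp
    ring
  have hpow : ∀ l : ℕ, β ^ ((l : ℝ) / σ) * β ^ (a - l / σ) = β ^ a := fun l => by
    rw [← rpow_add hβ, add_sub_cancel]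
  have halternating : ∑ l ∈ range (n + 1), (-1 : ℝ) ^ l * n.choose l = 0 := by
    exact_mod_cast Int.alternating_sum_range_choose_of_ne hn
  calc σ * nggSum σ β (n + 1) (a + 1) + (n - a * σ) * nggSum σ β (n + 1) a
      = ∑ l ∈ range (n + 1), ((n : ℝ) - l) * n.choose l *
            ((-1) ^ l * β ^ ((l : ℝ) / σ) * incGamma (a - l / σ) β)
          + σ * exp (-β) * β ^ a * ∑ l ∈ range (n + 1), (-1 : ℝ) ^ l * n.choose l := by
        simp only [nggSum, Nat.add_sub_cancel, mul_sum, ← sum_add_distrib]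
        refine sum_congr rfl fun l _ => ?_
        linear_combination (n.choose l * (-1) ^ l * β ^ ((l : ℝ) / σ)) * hterm l
          + (σ * exp (-β) * (-1) ^ l * n.choose l) * hpow l
    _ = n * nggSum σ β n a := by
        rw [halternating, mul_zero, add_zero, sum_range_succ_natCast_sub_mul_choose, nggSum]
        simp only [mul_assoc]

theorem ngg_gibbs_recursion_general
    (σ β : ℝ) (hσ0 : 0 < σ) (hβ : 0 < β)
    (n j : ℕ) (hj1 : 1 ≤ j) (hjn : j ≤ n) :
    Vngg σ β n j
      = Vngg σ β (n + 1) (j + 1) + ((n : ℝ) - (j : ℝ) * σ) * Vngg σ β (n + 1) j := by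
  have hn : n ≠ 0 := by omega
  have hΓ : Gamma ((n + 1 : ℕ) : ℝ) = n * Gamma n := by
    push_cast
    exact Gamma_add_one (Nat.cast_ne_zero.mpr hn)
  have hΓpos : 0 < Gamma n := Gamma_pos_of_pos (Nat.cast_pos.mpr (Nat.pos_of_ne_zero hn))
  have hσpow : σ ^ (j + 1 - 1) = σ ^ (j - 1) * σ := by
    rw [Nat.add_sub_cancel, pow_sub_one_mul (by omega)]
  have hrec := nggSum_recursion hσ0.ne' hβ hn j
  rw [Vngg_eq_nggSum, Vngg_eq_nggSum, Vngg_eq_nggSum, hΓ, hσpow, Nat.cast_succ]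
  field_simp
  linear_combination -hrec

theorem ngg_gibbs_recursion
    (σ β : ℝ) (hσ0 : 0 < σ) (hσ1 : σ < 1) (hβ : 0 < β)
    (n j : ℕ) (hj1 : 1 ≤ j) (hjn : j ≤ n) :
    Vngg σ β n j
      = Vngg σ β (n + 1) (j + 1) + ((n : ℝ) - (j : ℝ) * σ) * Vngg σ β (n + 1) j :=
  ngg_gibbs_recursion_general σ β hσ0 hβ n j hj1 hjn
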